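/- Let p be a probability distribution on ℕ with p_i > 0 for all i, and for indices 1 ≤ i < j let S_{i,j} = {q ∈ S : q_i / p_i = q_j / p_j}. Then S_{i,j} is a closed subset of S with empty interior in S (hence nowhere dense in S), where S carries the subspace topology induced by the ℓ¹-norm. -/

import Mathlib

/-!
Both ratios `qᵢ/pᵢ` and `qⱼ/pⱼ` are continuous linear functionals on `ℓ¹`, so the set where
they agree is closed. It has empty interior in `S` because `S` is convex: from any `q` in the
set, a short move towards the point mass at `i` stays in `S`, and along that segment the
difference of the two functionals grows linearly from `0` to `1/pᵢ ≠ 0`.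
-/

/-- The set of probability distributions on `ℕ`, as a subset of the Banach space `ℓ¹`. -/
def S : Set (lp (fun _ : ℕ => ℝ) 1) :=
  {q | (∀ i, 0 ≤ q i) ∧ HasSum (fun i => q i) 1}

open Filter Topology

theorem Convex.interior_setOf_eq_eq_empty {E : Type*} [AddCommGroup E] [Module ℝ E]
    [TopologicalSpace E] [IsTopologicalAddGroup E] [ContinuousSMul ℝ E] {K : Set E}
    (hK : Convex ℝ K) (f g : E →ₗ[ℝ] ℝ) {y : E} (hy : y ∈ K) (hfgy : f y ≠ g y) :
    interior {q : K | f q = g q} = ∅ := by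
  refine Set.eq_empty_of_forall_notMem fun x hx => ?_
  have hfgx : f x = g x := interior_subset (s := {q : K | f q = g q}) hx
  obtain ⟨U, hU, hUA⟩ := mem_nhds_subtype K x _ |>.mp (mem_interior_iff_mem_nhds.mp hx)
  have hpath : Tendsto (AffineMap.lineMap (x : E) y) (𝓝[>] (0 : ℝ)) (𝓝 x) :=
    (AffineMap.lineMap_continuous.tendsto' 0 _ (by simp)).mono_left nhdsWithin_le_nhds
  obtain ⟨t, htU, ht⟩ :=
    ((hpath.eventually_mem hU).and (Ioo_mem_nhdsGT zero_lt_one)).exists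
  have hmem := hUA (a := ⟨_, hK.lineMap_mem x.2 hy (Set.Ioo_subset_Icc_self ht)⟩) htU
  have hdiff : t * (f y - g y) = 0 := by
    simp only [Set.mem_ofPred_eq, AffineMap.lineMap_apply_module, map_add, map_smul,
      smul_eq_mul, hfgx] at hmem
    linarith
  exact hfgy (sub_eq_zero.mp ((mul_eq_zero.mp hdiff).resolve_left ht.1.ne'))

theorem convex_S : Convex ℝ S := by
  intro x hx y hy a b ha hb hab
  refine ⟨fun k => ?_, ?_⟩
  · simp only [lp.coeFn_add, lp.coeFn_smul, Pi.add_apply, Pi.smul_apply, smul_eq_mul]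
    exact add_nonneg (mul_nonneg ha (hx.1 k)) (mul_nonneg hb (hy.1 k))
  · have h := (hx.2.mul_left a).add (hy.2.mul_left b)
    rwa [mul_one, mul_one, hab] at h

theorem single_one_mem_S (k : ℕ) : lp.single 1 k (1 : ℝ) ∈ S :=
  ⟨(Pi.single_nonneg.mpr zero_le_one : (0 : ℕ → ℝ) ≤ Pi.single k 1), hasSum_pi_single k 1⟩

theorem ratio_coincidence_set_closed_and_interior_empty_general (p : ℕ → ℝ)
    (hpos : ∀ i, 0 < p i) (i j : ℕ) (hij : i < j) :
    IsClosed {q : S | q.1 i / p i = q.1 j / p j} ∧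
      interior {q : S | q.1 i / p i = q.1 j / p j} = ∅ := by
  set f : lp (fun _ : ℕ => ℝ) 1 →L[ℝ] ℝ := (p i)⁻¹ • lp.evalCLM ℝ _ 1 i
  set g : lp (fun _ : ℕ => ℝ) 1 →L[ℝ] ℝ := (p j)⁻¹ • lp.evalCLM ℝ _ 1 j
  have hset : {q : S | q.1 i / p i = q.1 j / p j} = {q : S | f q = g q} := by
    ext q
    simp [f, g, div_eq_inv_mul, lp.evalCLM]
  rw [hset]
  refine ⟨isClosed_eq (f.continuous.comp continuous_subtype_val)
    (g.continuous.comp continuous_subtype_val),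
    convex_S.interior_setOf_eq_eq_empty f g (single_one_mem_S i) ?_⟩
  simp [f, g, lp.evalCLM, (hpos i).ne', hij.ne']

/-- For a probability distribution `p` on `ℕ` with all components positive
and indices `i < j`, the set `S_{i,j} = {q ∈ S : qᵢ/pᵢ = qⱼ/pⱼ}` is closed in `S` and has
empty interior in `S` (hence is nowhere dense in `S`), for the ℓ¹-subspace topology. -/
theorem ratio_coincidence_set_closed_and_interior_empty (p : ℕ → ℝ)
    (hpos : ∀ i, 0 < p i) (hsum : HasSum p 1) (i j : ℕ) (hij : i < j) :
    IsClosed {q : S | q.1 i / p i = q.1 j / p j} ∧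
      interior {q : S | q.1 i / p i = q.1 j / p j} = ∅ :=
  ratio_coincidence_set_closed_and_interior_empty_general p hpos i j hij
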